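/- arXiv:2307.06069 — 2 statements merged into one kernel-verified Lean document; each statement's English description precedes it below -/
import Mathlib

section
/- Let C be a pivotal finite tensor category and I a proper right tensor ideal of C. Then the right categorical trace of C vanishes identically on I: for every X ∈ I and every endomorphism f of X, tr_X(f) = 0. -/
open CategoryTheory CategoryTheory.Limits MonoidalCategory

universe v u

variable (C : Type u) [Category.{v} C] [MonoidalCategory C] [RightRigidCategory C]

/-- A pivotal structure on a rigid monoidal category, presented as the induced
right duality data on the (left) duals `Xᘁ`: right evaluation and coevaluation
morphisms satisfying the zig-zag identities and naturality. -/
structure PivotalData where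
  evR : ∀ X : C, X ⊗ Xᘁ ⟶ 𝟙_ C
  coevR : ∀ X : C, 𝟙_ C ⟶ Xᘁ ⊗ X
  zig : ∀ X : C,
    (ρ_ X).inv ≫ (X ◁ coevR X) ≫ (α_ X (Xᘁ) X).inv ≫ (evR X ▷ X) ≫ (λ_ X).hom = 𝟙 X
  zag : ∀ X : C,
    (λ_ (Xᘁ)).inv ≫ (coevR X ▷ (Xᘁ)) ≫ (α_ (Xᘁ) X (Xᘁ)).hom ≫ ((Xᘁ) ◁ evR X) ≫
      (ρ_ (Xᘁ)).hom = 𝟙 (Xᘁ)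
  evR_natural : ∀ {X Y : C} (f : X ⟶ Y), (f ▷ (Yᘁ)) ≫ evR Y = (X ◁ fᘁ) ≫ evR X

variable {C}

/-- The right categorical trace tr_X(f) = ev^R_X ∘ (f ⊗ id_{X^*}) ∘ coev^L_X,
an element of End(𝟙). -/
def catTrace (P : PivotalData C) (X : C) (f : X ⟶ X) : 𝟙_ C ⟶ 𝟙_ C :=
  η_ X (Xᘁ) ≫ (f ▷ (Xᘁ)) ≫ P.evR X

/-- A right tensor ideal: a full subcategory closed under right tensoring and
under retracts. -/
structure RightTensorIdeal where
  mem : C → Prop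
  tensor_mem : ∀ {X : C}, mem X → ∀ V : C, mem (X ⊗ V)
  retract_mem : ∀ {X Y : C}, mem Y → ∀ (i : X ⟶ Y) (r : Y ⟶ X), i ≫ r = 𝟙 X → mem X

/-- in a pivotal finite tensor category `C`, the right categorical
trace vanishes identically on any proper right tensor ideal `I`. -/
theorem catTrace_vanishes_on_proper_ideal
    (k : Type u) [Field k] [IsAlgClosed k]
    {C : Type u} [Category.{v} C] [Abelian C] [Linear k C]
    [MonoidalCategory C] [MonoidalPreadditive C] [MonoidalLinear k C]
    [RigidCategory C] [Simple (𝟙_ C)]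
    [EnoughProjectives C] [∀ X Y : C, FiniteDimensional k (X ⟶ Y)]
    (P : PivotalData C) (I : RightTensorIdeal (C := C))
    (hproper : ∃ Y : C, ¬ I.mem Y)
    (X : C) (hX : I.mem X) (f : X ⟶ X) :
    catTrace P X f = 0 := by
  by_contra ht
  obtain ⟨Y, hY⟩ := hproper
  have : IsIso (catTrace P X f) := isIso_of_hom_simple ht
  have hunit : I.mem (𝟙_ C) := by
    refine I.retract_mem (I.tensor_mem hX (Xᘁ))
      (η_ X (Xᘁ) ≫ (f ▷ (Xᘁ))) (P.evR X ≫ inv (catTrace P X f)) ?_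
    rw [← Category.assoc, show (η_ X (Xᘁ) ≫ (f ▷ (Xᘁ))) ≫ P.evR X = catTrace P X f by
      simp [catTrace], IsIso.hom_inv_id]
  exact hY <| I.retract_mem (I.tensor_mem hunit Y) (λ_ Y).inv (λ_ Y).hom (by simp)
end

section
/- Let C be a ribbon finite tensor category, I a tensor ideal with modified trace t, and let L^B_X be a closed C-coloured ribbon graph containing an embedded knot component coloured by B ∈ C and a distinct edge coloured by X ∈ I. Then for any short exact sequence 0 → A → B → C → 0 in C, the renormalised invariant satisfies F'_t(L^B_X) = F'_t(L^A_X) + F'_t(L^C_X). Consequently F'_t(L^B_X) depends on B only through its class in the Grothendieck group: F'_t(L^B_X) = Σ_{U simple} [B : U] · F'_t(L^U_X). -/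
open CategoryTheory CategoryTheory.Limits MonoidalCategory

universe v u

section Defs

variable (k : Type u) [Field k]
variable (C : Type u) [Category.{v} C] [Preadditive C] [Linear k C]
  [MonoidalCategory C] [RightRigidCategory C]

/-- A ribbon structure on a braided rigid monoidal category: a natural family
of twist automorphisms `θ_X` with `θ_{X⊗Y} = c_{Y,X} ∘ c_{X,Y} ∘ (θ_X ⊗ θ_Y)`
and `θ_{X^*} = (θ_X)^*`. -/
structure RibbonStructure [BraidedCategory C] where
  twist : ∀ X : C, X ≅ X
  naturality : ∀ {X Y : C} (f : X ⟶ Y), f ≫ (twist Y).hom = (twist X).hom ≫ f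
  twist_tensor : ∀ X Y : C,
    (twist (X ⊗ Y)).hom = (β_ X Y).hom ≫ (β_ Y X).hom ≫ ((twist X).hom ⊗ₘ (twist Y).hom)
  twist_dual : ∀ X : C, (twist (Xᘁ)).hom = ((twist X).hom)ᘁ

/-- A (two-sided) tensor ideal. -/
structure TensorIdeal where
  mem : C → Prop
  tensor_mem_right : ∀ {X : C}, mem X → ∀ V : C, mem (X ⊗ V)
  tensor_mem_left : ∀ {X : C}, mem X → ∀ V : C, mem (V ⊗ X)
  retract_mem : ∀ {X Y : C}, mem Y → ∀ (i : X ⟶ Y) (r : Y ⟶ X), i ≫ r = 𝟙 X → mem X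

/-- A modified trace on a tensor ideal `I`: a family of linear maps
`End(X) → k` for `X ∈ I`, cyclic and satisfying the right partial trace
property. -/
structure ModifiedTrace (P : PivotalData C) (I : TensorIdeal C) where
  t : ∀ (X : C), I.mem X → (X ⟶ X) → k
  t_add : ∀ (X : C) (hX : I.mem X) (f g : X ⟶ X), t X hX (f + g) = t X hX f + t X hX g
  t_smul : ∀ (X : C) (hX : I.mem X) (c : k) (f : X ⟶ X), t X hX (c • f) = c • t X hX f
  cyclic : ∀ {X Y : C} (hX : I.mem X) (hY : I.mem Y) (f : X ⟶ Y) (g : Y ⟶ X),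
    t X hX (f ≫ g) = t Y hY (g ≫ f)
  partial_trace : ∀ (X : C) (hX : I.mem X) (V : C) (f : X ⊗ V ⟶ X ⊗ V),
    t (X ⊗ V) (I.tensor_mem_right hX V) f =
      t X hX ((ρ_ X).inv ≫ (X ◁ η_ V (Vᘁ)) ≫ (α_ X V (Vᘁ)).inv ≫ (f ▷ (Vᘁ)) ≫
        (α_ X V (Vᘁ)).hom ≫ (X ◁ P.evR V) ≫ (ρ_ X).hom)

variable {k C}

/-- Closing up a morphism `𝟙 ⟶ X ⊗ X^*` into an endomorphism of `X` using the
evaluation; this is the cutting presentation of the closed graph along the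
`X`-coloured edge. -/
def closeUp (X : C) (f : 𝟙_ C ⟶ X ⊗ Xᘁ) : X ⟶ X :=
  (λ_ X).inv ≫ (f ▷ X) ≫ (α_ X (Xᘁ) X).hom ≫ (X ◁ ε_ X (Xᘁ)) ≫ (ρ_ X).hom

end Defs

/-!
Up to an epimorphism `π : Q ⟶ 𝟙` (a refinement, which is all an abelian category needs for a
diagram chase), `coev^R_B` splits as `a ≫ (B^* ◁ f) + c ≫ (g^* ▷ B)`, where `a` and `c` lift
`coev^R_A` along `f^* ▷ A` and `coev^R_C` along `C^* ◁ g`. Dinaturality of `η` turns the two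
summands into `coev^R_A ≫ η_A` and `coev^R_C ≫ η_C`; the trace and `closeUp` are additive.
-/

namespace PivotalData

variable {C : Type u} [Category.{v} C] [MonoidalCategory C] [RightRigidCategory C]
  (P : PivotalData C)

@[reducible]
def exactPairing (X : C) : ExactPairing (Xᘁ) X where
  coevaluation' := P.coevR X
  evaluation' := P.evR X
  coevaluation_evaluation' := by
    rw [← cancel_epi (ρ_ X).inv, ← cancel_mono (λ_ X).hom]
    simpa using P.zig X
  evaluation_coevaluation' := by
    rw [← cancel_epi (λ_ (Xᘁ)).inv, ← cancel_mono (ρ_ (Xᘁ)).hom]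
    simpa using P.zag X

lemma coevR_comp_whiskerLeft {U V : C} (φ : U ⟶ V) :
    P.coevR U ≫ ((Uᘁ) ◁ φ) = P.coevR V ≫ ((φᘁ) ▷ V) := by
  let : ExactPairing (Uᘁ) U := P.exactPairing U
  let : ExactPairing (Vᘁ) V := P.exactPairing V
  let : HasLeftDual U := ⟨Uᘁ⟩
  let : HasLeftDual V := ⟨Vᘁ⟩
  -- with these left duals, the left adjoint mate of `φ` is its right adjoint mate
  have hmate : (ᘁφ) = φᘁ := by
    change (λ_ (Vᘁ)).inv ≫ (P.coevR U ▷ (Vᘁ)) ≫ (((Uᘁ) ◁ φ) ▷ (Vᘁ)) ≫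
        (α_ (Uᘁ) V (Vᘁ)).hom ≫ ((Uᘁ) ◁ P.evR V) ≫ (ρ_ (Uᘁ)).hom = φᘁ
    rw [associator_naturality_middle_assoc, ← whiskerLeft_comp_assoc, P.evR_natural φ,
      whiskerLeft_comp_assoc, ← associator_naturality_right_assoc, ← whisker_exchange_assoc,
      ← leftUnitor_inv_naturality_assoc, P.zag U, Category.comp_id]
  rw [← hmate]
  exact (coevaluation_comp_leftAdjointMate φ).symm

end PivotalData

section Preadditive

variable {C : Type u} [Category.{v} C] [Preadditive C] [MonoidalCategory C]
  [MonoidalPreadditive C]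

@[simp]
lemma rightAdjointMate_zero {X Y : C} [HasRightDual X] [HasRightDual Y] :
    ((0 : X ⟶ Y)ᘁ) = 0 := by
  simp [rightAdjointMate]

lemma closeUp_add [RightRigidCategory C] (X : C) (a b : 𝟙_ C ⟶ X ⊗ Xᘁ) :
    closeUp X (a + b) = closeUp X a + closeUp X b := by
  simp only [closeUp, MonoidalPreadditive.add_whiskerRight, Preadditive.add_comp,
    Preadditive.comp_add]

end Preadditive

section Abelian

variable {C : Type u} [Category.{v} C] [Abelian C] [MonoidalCategory C] [MonoidalPreadditive C]
  [RigidCategory C] {S : ShortComplex C} (hS : S.ShortExact)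

include hS in
lemma CategoryTheory.ShortComplex.ShortExact.map_tensorLeft (W : C) :
    (S.map (tensorLeft W)).ShortExact :=
  have := (tensorLeftAdjunction W (Wᘁ)).rightAdjoint_preservesLimits
  have := (tensorLeftAdjunction (ᘁW) W).leftAdjoint_preservesColimits
  hS.map_of_exact _

namespace PivotalData

variable (P : PivotalData C)

include hS in
lemma exists_coevR_decomposition :
    ∃ (Q : C) (π : Q ⟶ 𝟙_ C) (_ : Epi π) (a : Q ⟶ (S.X₂ᘁ) ⊗ S.X₁) (c : Q ⟶ (S.X₃ᘁ) ⊗ S.X₂),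
      π ≫ P.coevR S.X₂ = a ≫ ((S.X₂ᘁ) ◁ S.f) + c ≫ ((S.gᘁ) ▷ S.X₂) ∧
      a ≫ ((S.fᘁ) ▷ S.X₁) = π ≫ P.coevR S.X₁ ∧
      c ≫ ((S.X₃ᘁ) ◁ S.g) = π ≫ P.coevR S.X₃ := by
  have : Epi ((S.X₃ᘁ) ◁ S.g) := (hS.map_tensorLeft (S.X₃ᘁ)).epi_g
  have : Mono ((S.X₁ᘁ) ◁ S.f) := (hS.map_tensorLeft (S.X₁ᘁ)).mono_f
  obtain ⟨Q₀, π₀, _, c, hc⟩ := surjective_up_to_refinements_of_epi ((S.X₃ᘁ) ◁ S.g) (P.coevR S.X₃)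
  have hδ : (π₀ ≫ P.coevR S.X₂ - c ≫ ((S.gᘁ) ▷ S.X₂)) ≫ ((S.X₂ᘁ) ◁ S.g) = 0 := by
    rw [Preadditive.sub_comp, Category.assoc, P.coevR_comp_whiskerLeft, Category.assoc,
      ← whisker_exchange, ← Category.assoc c, ← hc, Category.assoc, sub_self]
  obtain ⟨Q, π₁, _, (a : Q ⟶ (S.X₂ᘁ) ⊗ S.X₁), ha⟩ :=
    (hS.map_tensorLeft (S.X₂ᘁ)).exact.exact_up_to_refinements _ hδ
  have hB : a ≫ ((S.X₂ᘁ) ◁ S.f) = π₁ ≫ π₀ ≫ P.coevR S.X₂ - π₁ ≫ c ≫ ((S.gᘁ) ▷ S.X₂) := by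
    rw [← Preadditive.comp_sub]
    exact ha.symm
  refine ⟨Q, π₁ ≫ π₀, inferInstance, a, π₁ ≫ c, by simp [hB], ?_, by simp [hc]⟩
  rw [← cancel_mono ((S.X₁ᘁ) ◁ S.f)]
  calc (a ≫ ((S.fᘁ) ▷ S.X₁)) ≫ ((S.X₁ᘁ) ◁ S.f) = (a ≫ ((S.X₂ᘁ) ◁ S.f)) ≫ ((S.fᘁ) ▷ S.X₂) := by
        rw [Category.assoc, Category.assoc, whisker_exchange]
    _ = π₁ ≫ π₀ ≫ P.coevR S.X₂ ≫ ((S.fᘁ) ▷ S.X₂) -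
          π₁ ≫ c ≫ (rightAdjointMate (S.f ≫ S.g) ▷ S.X₂) := by
        rw [hB, Preadditive.sub_comp, comp_rightAdjointMate, comp_whiskerRight]
        simp only [Category.assoc]
    _ = ((π₁ ≫ π₀) ≫ P.coevR S.X₁) ≫ ((S.X₁ᘁ) ◁ S.f) := by
        rw [S.zero, rightAdjointMate_zero, ← P.coevR_comp_whiskerLeft]
        simp

include hS in
lemma coevR_comp_dinatural_eq_add {Z : C} (η : ∀ B : C, (Bᘁ) ⊗ B ⟶ Z)
    (hη : ∀ {A B : C} (φ : A ⟶ B), ((Bᘁ) ◁ φ) ≫ η B = ((φᘁ) ▷ A) ≫ η A) :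
    P.coevR S.X₂ ≫ η S.X₂ = P.coevR S.X₁ ≫ η S.X₁ + P.coevR S.X₃ ≫ η S.X₃ := by
  obtain ⟨Q, π, _, a, c, hB, hA, hC⟩ := P.exists_coevR_decomposition hS
  rw [← cancel_epi π]
  calc π ≫ P.coevR S.X₂ ≫ η S.X₂
      = a ≫ ((S.X₂ᘁ) ◁ S.f) ≫ η S.X₂ + c ≫ ((S.gᘁ) ▷ S.X₂) ≫ η S.X₂ := by
        rw [← Category.assoc, hB, Preadditive.add_comp, Category.assoc, Category.assoc]
    _ = a ≫ ((S.fᘁ) ▷ S.X₁) ≫ η S.X₁ + c ≫ ((S.X₃ᘁ) ◁ S.g) ≫ η S.X₃ := by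
        rw [hη S.f, hη S.g]
    _ = π ≫ (P.coevR S.X₁ ≫ η S.X₁ + P.coevR S.X₃ ≫ η S.X₃) := by
        rw [← Category.assoc, hA, ← Category.assoc c, hC, Preadditive.comp_add, Category.assoc,
          Category.assoc]

end PivotalData

end Abelian

/-- let `C` be a ribbon finite tensor category, `I` a tensor ideal
with modified trace `t`, and `L^B_X` a closed `C`-coloured ribbon graph with a
knot component coloured by `B` and a distinct edge coloured by `X ∈ I`.  The
knot component coloured by `B` determines a family `η_B : B^* ⊗ B ⟶ X ⊗ X^*`,
dinatural in `B`, and the renormalised invariant is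
`F'_t(L^B_X) = t_X` of the closure of `coev^R_B ≫ η_B`.  Then for any short
exact sequence `0 → A → B → C' → 0` in `C`,
`F'_t(L^B_X) = F'_t(L^A_X) + F'_t(L^{C'}_X)`; consequently `F'_t(L^B_X)`
depends on `B` only through its class in the Grothendieck group. -/
theorem renormalised_invariant_additive_over_ses
    (k : Type u) [Field k] [IsAlgClosed k]
    (C : Type u) [Category.{v} C] [Abelian C] [Linear k C]
    [MonoidalCategory C] [MonoidalPreadditive C] [MonoidalLinear k C]
    [RigidCategory C] [BraidedCategory C] [Simple (𝟙_ C)]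
    [EnoughProjectives C] [∀ X Y : C, FiniteDimensional k (X ⟶ Y)]
    (P : PivotalData C) (R : RibbonStructure C)
    (I : TensorIdeal C) (t : ModifiedTrace k C P I)
    (X : C) (hX : I.mem X)
    (η : ∀ B : C, (Bᘁ) ⊗ B ⟶ X ⊗ Xᘁ)
    (hdinat : ∀ {A B : C} (φ : A ⟶ B), ((Bᘁ) ◁ φ) ≫ η B = ((rightAdjointMate φ) ▷ A) ≫ η A)
    (S : ShortComplex C) (hS : S.ShortExact) :
    t.t X hX (closeUp X (P.coevR S.X₂ ≫ η S.X₂)) =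
      t.t X hX (closeUp X (P.coevR S.X₁ ≫ η S.X₁)) +
        t.t X hX (closeUp X (P.coevR S.X₃ ≫ η S.X₃)) := by
  rw [P.coevR_comp_dinatural_eq_add hS η hdinat, closeUp_add, t.t_add]
end
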